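/- Let X and Y be coherent lattices, each equipped with its Lawson topology, and let R ⊆ X × Y be a DH-relation (so that (X, R, Y) is a DH-space). Let X₀ = {x' ∈ X : ∃ y ∈ Y, x' R y and ∀ z, (x' ≤ z and z R y) → z = x'} (the union over y ∈ Y of the sets of maximal elements of R⁻¹[y]). Then for every x ∈ X, x is the greatest lower bound of the set ↑x ∩ X₀ = {x' ∈ X₀ : x ≤ x'}. -/

import Mathlib

/-- A filter of a partially ordered set with finite meets:
a nonempty upper set closed under binary meets. -/
def IsFilterSet {X : Type*} [SemilatticeInf X] (F : Set X) : Prop :=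
  F.Nonempty ∧ IsUpperSet F ∧ ∀ x ∈ F, ∀ y ∈ F, x ⊓ y ∈ F

/-- A Scott-open subset of a complete lattice: an upper set `U` such that whenever the
supremum of a (nonempty) directed set belongs to `U`, the directed set meets `U`. -/
def ScottOpen {X : Type*} [CompleteLattice X] (U : Set X) : Prop :=
  IsUpperSet U ∧
    ∀ S : Set X, S.Nonempty → DirectedOn (· ≤ ·) S → sSup S ∈ U → (S ∩ U).Nonempty

/-- The Lawson topology on a complete lattice: the topology generated by the Scott-open
sets together with the complements of principal upsets `↑x`. -/
def lawsonTop (X : Type*) [CompleteLattice X] : TopologicalSpace X :=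
  TopologicalSpace.generateFrom
    ({U : Set X | ScottOpen U} ∪ {S : Set X | ∃ x : X, S = (Set.Ici x)ᶜ})

/-- The image `R[A] = {y : ∃ x ∈ A, x R y}` of a set under a relation. -/
def relImage {X Y : Type*} (R : X → Y → Prop) (A : Set X) : Set Y :=
  {y | ∃ x ∈ A, R x y}

/-- The preimage `R⁻¹[B] = {x : ∃ y ∈ B, x R y}` of a set under a relation. -/
def relPreimage {X Y : Type*} (R : X → Y → Prop) (B : Set Y) : Set X :=
  {x | ∃ y ∈ B, R x y}

/-- `CompleteLattice.IsCompactElement` as Mathlib defined it in December 2024. -/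
def CompleteLattice.IsCompactElement {α : Type*} [CompleteLattice α] (k : α) : Prop :=
  ∀ s : Set α, k ≤ sSup s → ∃ t : Finset α, ↑t ⊆ s ∧ k ≤ t.sup id

/-- A DH-relation between complete lattices `X` and `Y` carrying topologies `tX`, `tY`:
`R` is interior, the complements `(R[x])ᶜ` and `(R⁻¹[y])ᶜ` are filters, and
`R[x] ⊆ R[x'] → x' ≤ x`, `R⁻¹[y] ⊆ R⁻¹[y'] → y' ≤ y`. -/
def IsDHRel {X Y : Type*} [CompleteLattice X] [CompleteLattice Y]
    (tX : TopologicalSpace X) (tY : TopologicalSpace Y) (R : X → Y → Prop) : Prop :=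
  (∀ x : X, @IsClosed Y tY {y | R x y}) ∧
  (∀ U : Set X, @IsClopen X tX U → @IsClopen Y tY (relImage R U)) ∧
  (∀ y : Y, @IsClosed X tX {x | R x y}) ∧
  (∀ V : Set Y, @IsClopen Y tY V → @IsClopen X tX (relPreimage R V)) ∧
  (∀ x : X, IsFilterSet {y | R x y}ᶜ) ∧
  (∀ y : Y, IsFilterSet {x | R x y}ᶜ) ∧
  (∀ x x' : X, {y | R x y} ⊆ {y | R x' y} → x' ≤ x) ∧
  (∀ y y' : Y, {x | R x y} ⊆ {x | R x y'} → y' ≤ y)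


lemma lawson_closed_dirSup {X : Type*} [CompleteLattice X] {C : Set X}
    (hC : @IsClosed X (lawsonTop X) C) {D : Set X} (hD : D ⊆ C)
    (hne : D.Nonempty) (hdir : DirectedOn (· ≤ ·) D) : sSup D ∈ C := by
  by_contra h
  have hopen : TopologicalSpace.GenerateOpen
      ({U : Set X | ScottOpen U} ∪ {S : Set X | ∃ x : X, S = (Set.Ici x)ᶜ}) Cᶜ := by
    have := hC.isOpen_compl
    exact this
  have key : ∀ U : Set X, TopologicalSpace.GenerateOpen
      ({U : Set X | ScottOpen U} ∪ {S : Set X | ∃ x : X, S = (Set.Ici x)ᶜ}) U →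
      sSup D ∈ U → ∃ d ∈ D, ∀ e ∈ D, d ≤ e → e ∈ U := by
    intro U hU
    induction hU with
    | basic U hU =>
      intro hsup
      rcases hU with hU | ⟨z, rfl⟩
      · obtain ⟨d, hdD, hdU⟩ := hU.2 D hne hdir hsup
        exact ⟨d, hdD, fun e heD hde => hU.1 hde hdU⟩
      · obtain ⟨d, hdD⟩ := hne
        refine ⟨d, hdD, fun e heD _ hze => ?_⟩
        exact hsup (le_trans hze (le_sSup heD))
    | univ =>
      intro _
      obtain ⟨d, hdD⟩ := hne
      exact ⟨d, hdD, fun e heD _ => trivial⟩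
    | inter U V hU hV ihU ihV =>
      intro hsup
      obtain ⟨d₁, hd₁, h₁⟩ := ihU hsup.1
      obtain ⟨d₂, hd₂, h₂⟩ := ihV hsup.2
      obtain ⟨d, hdD, hd₁d, hd₂d⟩ := hdir d₁ hd₁ d₂ hd₂
      exact ⟨d, hdD, fun e heD hde =>
        ⟨h₁ e heD (le_trans hd₁d hde), h₂ e heD (le_trans hd₂d hde)⟩⟩
    | sUnion S hS ih =>
      intro hsup
      obtain ⟨U, hUS, hUmem⟩ := hsup
      obtain ⟨d, hdD, hd⟩ := ih U hUS hUmem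
      exact ⟨d, hdD, fun e heD hde => ⟨U, hUS, hd e heD hde⟩⟩
  obtain ⟨d, hdD, hd⟩ := key Cᶜ hopen h
  exact hd d hdD le_rfl (hD hdD)

/-- In a DH-space `(X, R, Y)` of coherent lattices with their Lawson
topologies, every `x ∈ X` is the greatest lower bound of `↑x ∩ X₀`, where `X₀` is the
union over `y ∈ Y` of the sets of maximal elements of `R⁻¹[y]`. -/
theorem statement_9 {X Y : Type*} [CompleteLattice X] [CompleteLattice Y]
    (hXalg : ∀ x : X, x = sSup {k : X | CompleteLattice.IsCompactElement k ∧ k ≤ x})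
    (hXtop : CompleteLattice.IsCompactElement (⊤ : X))
    (hXinf : ∀ k l : X, CompleteLattice.IsCompactElement k →
      CompleteLattice.IsCompactElement l → CompleteLattice.IsCompactElement (k ⊓ l))
    (hYalg : ∀ y : Y, y = sSup {k : Y | CompleteLattice.IsCompactElement k ∧ k ≤ y})
    (hYtop : CompleteLattice.IsCompactElement (⊤ : Y))
    (hYinf : ∀ k l : Y, CompleteLattice.IsCompactElement k →
      CompleteLattice.IsCompactElement l → CompleteLattice.IsCompactElement (k ⊓ l))
    (R : X → Y → Prop)
    (hR : IsDHRel (lawsonTop X) (lawsonTop Y) R)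
    (x : X) :
    IsGLB (Set.Ici x ∩
      {x' : X | ∃ y : Y, R x' y ∧ ∀ z : X, x' ≤ z → R z y → z = x'}) x := by
  obtain ⟨hRxcl, hRim, hRycl, hRpre, hFx, hFy, hIII, hIV⟩ := hR
  constructor
  · intro x' hx'
    exact hx'.1
  · intro b hb
    apply hIII x b
    intro y hxy
    -- R⁻¹[y] is Lawson-closed, hence closed under directed sups; Zorn applies.
    have hclosed := hRycl y
    have hzorn : ∃ m, x ≤ m ∧ Maximal (· ∈ {x : X | R x y}) m := by
      apply zorn_le_nonempty₀
      · intro c hc hchain w hw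
        refine ⟨sSup c, ?_, fun z hz => le_sSup hz⟩
        exact lawson_closed_dirSup hclosed hc ⟨w, hw⟩ (hchain.directedOn)
      · exact hxy
    obtain ⟨m, hxm, hmR, hmax⟩ := hzorn
    have hmX0 : m ∈ Set.Ici x ∩
        {x' : X | ∃ y : Y, R x' y ∧ ∀ z : X, x' ≤ z → R z y → z = x'} :=
      ⟨hxm, y, hmR, fun z hmz hzy => le_antisymm (hmax hzy hmz) hmz⟩
    have hbm : b ≤ m := hb hmX0
    -- R⁻¹[y] is a lower set since its complement is a filter (upper set)
    have hlower : ∀ u v : X, u ≤ v → R v y → R u y := by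
      intro u v huv hv
      by_contra hu
      exact ((hFy y).2.1 huv hu) hv
    exact hlower b m hbm hmR
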